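/- arXiv:2109.08671 — 10 statements merged into one kernel-verified Lean document; each statement's English description precedes it below -/
import Mathlib

section
/- An exclusive allocation A of goods with copies is Pareto optimal with respect to additive valuations v_1,…,v_n if and only if its dual allocation A* is Pareto optimal with respect to the dual valuations v*_i = −v_i. -/
open Finset

variable {τ : Type*} [Fintype τ] [DecidableEq τ]

def IsAlloc (n : ℕ) (k : τ → ℕ) (A : Fin n → Finset τ) : Prop :=
  ∀ t, (Finset.univ.filter fun i => t ∈ A i).card = k t

def vOf (v : τ → ℝ) (S : Finset τ) : ℝ := ∑ t ∈ S, v t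

def dualAlloc {n : ℕ} (A : Fin n → Finset τ) : Fin n → Finset τ :=
  fun i => Finset.univ \ A i

def Dominates {n : ℕ} (v : Fin n → τ → ℝ) (B A : Fin n → Finset τ) : Prop :=
  (∀ i, vOf (v i) (A i) ≤ vOf (v i) (B i)) ∧ ∃ j, vOf (v j) (A j) < vOf (v j) (B j)

def ParetoOpt {n : ℕ} (k : τ → ℕ) (v : Fin n → τ → ℝ) (A : Fin n → Finset τ) : Prop :=
  ¬ ∃ B, IsAlloc n k B ∧ Dominates v B A

/-!
Complementing every bundle is an involution on bundles that turns allocations of the multiset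
with `k t` copies into allocations of the one with `n - k t` copies. Under the negated valuation,
the value of the complement `T \ S` is `v S - v T`, which differs from `v S` by a constant for each
agent; hence complementation preserves Pareto domination in both directions, and so maps the
dominators of `A` bijectively onto those of `A*`.
-/

omit [Fintype τ] in
theorem IsAlloc.le {n : ℕ} {k : τ → ℕ} {A : Fin n → Finset τ} (hA : IsAlloc n k A) (t : τ) :
    k t ≤ n := by
  rw [← hA t]
  simpa using card_filter_le (univ : Finset (Fin n)) fun i => t ∈ A i

theorem dualAlloc_involutive {n : ℕ} :
    Function.Involutive (dualAlloc : (Fin n → Finset τ) → Fin n → Finset τ) := by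
  intro A
  funext i
  simp [dualAlloc]

theorem isAlloc_dualAlloc_iff {n : ℕ} {k : τ → ℕ} {A : Fin n → Finset τ}
    (hk : ∀ t, k t ≤ n) : IsAlloc n (fun t => n - k t) (dualAlloc A) ↔ IsAlloc n k A := by
  refine forall_congr' fun t => ?_
  dsimp only
  have hcard : (univ.filter fun i => t ∈ dualAlloc A i).card
      = n - (univ.filter fun i => t ∈ A i).card := by
    simp only [dualAlloc, mem_sdiff, mem_univ, true_and, filter_not,
      card_sdiff_of_subset (filter_subset _ _), card_univ, Fintype.card_fin]
  have hle := card_filter_le (univ : Finset (Fin n)) fun i => t ∈ A i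
  rw [card_univ, Fintype.card_fin] at hle
  have := hk t
  omega

theorem vOf_neg_compl (v : τ → ℝ) (S : Finset τ) :
    vOf (fun t => -v t) (univ \ S) = vOf v S - vOf v univ := by
  simp only [vOf, sum_sdiff_eq_sub (subset_univ S), sum_neg_distrib]
  ring

theorem dominates_neg_dualAlloc_iff {n : ℕ} {v : Fin n → τ → ℝ} {B A : Fin n → Finset τ} :
    Dominates (fun i t => -v i t) (dualAlloc B) (dualAlloc A) ↔ Dominates v B A := by
  simp only [Dominates, dualAlloc, vOf_neg_compl, sub_le_sub_iff_right, sub_lt_sub_iff_right]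

theorem pareto_dual_general {n : ℕ} {k : τ → ℕ} {v : Fin n → τ → ℝ} {A : Fin n → Finset τ}
    (hA : IsAlloc n k A) :
    ParetoOpt k v A ↔
      ParetoOpt (fun t => n - k t) (fun i t => -(v i t)) (dualAlloc A) := by
  unfold ParetoOpt
  conv_rhs => rw [dualAlloc_involutive.surjective.exists]
  simp only [isAlloc_dualAlloc_iff hA.le, dominates_neg_dualAlloc_iff]

/-- An exclusive allocation is Pareto optimal iff its dual
allocation is Pareto optimal for the dual (negated) valuations. -/
theorem pareto_dual {n : ℕ} {k : τ → ℕ} {v : Fin n → τ → ℝ} {A : Fin n → Finset τ}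
    (hk : ∀ t, k t ≤ n) (hA : IsAlloc n k A) :
    ParetoOpt k v A ↔
      ParetoOpt (fun t => n - k t) (fun i t => -(v i t)) (dualAlloc A) :=
  pareto_dual_general hA
end

section
/- Duality meta-theorem for envy-based fairness: for any comparison criterion f, an exclusive allocation A is f_WC-fair with respect to valuations v if and only if its dual allocation A* is f^c_WC-fair with respect to the dual valuations −v. Here f_WC(v, B_I, B_U) = f(v, B_I \ B_U, B_U \ B_I) and f^c(v, B_I, B_U) = f(−v, B_U, B_I). -/
open Finset

variable {τ : Type*} [Fintype τ] [DecidableEq τ]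

def fWC (f : (τ → ℝ) → Finset τ → Finset τ → Prop) :
    (τ → ℝ) → Finset τ → Finset τ → Prop :=
  fun v BI BU => f v (BI \ BU) (BU \ BI)

def fComp (f : (τ → ℝ) → Finset τ → Finset τ → Prop) :
    (τ → ℝ) → Finset τ → Finset τ → Prop :=
  fun v BI BU => f (fun t => -(v t)) BU BI

def IsFair {n : ℕ} (f : (τ → ℝ) → Finset τ → Finset τ → Prop)
    (v : Fin n → τ → ℝ) (A : Fin n → Finset τ) : Prop :=
  ∀ i j, f (v i) (A i) (A j)

/-- Complementing both bundles swaps their differences, which undoes the swap in `fComp`;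
negating the valuation twice undoes its negation. -/
theorem fWC_fComp_neg_compl (f : (τ → ℝ) → Finset τ → Finset τ → Prop) (v : τ → ℝ)
    (X Y : Finset τ) :
    fWC (fComp f) (fun t => -(v t)) (univ \ X) (univ \ Y) ↔ fWC f v X Y := by
  simp only [fWC, fComp, neg_neg, ← compl_eq_univ_sdiff, compl_sdiff_compl]

/-- Duality meta-theorem for envy-based fairness: A is
f_WC-fair w.r.t. v iff the dual allocation is f^c_WC-fair w.r.t. -v. -/
theorem wc_duality {n : ℕ} (f : (τ → ℝ) → Finset τ → Finset τ → Prop)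
    (v : Fin n → τ → ℝ) (A : Fin n → Finset τ) :
    IsFair (fWC f) v A ↔
      IsFair (fWC (fComp f)) (fun i t => -(v i t)) (dualAlloc A) :=
  forall₂_congr fun i j => (fWC_fComp_neg_compl f (v i) (A i) (A j)).symm
end

section
/- For an exclusive allocation of goods with copies and additive valuations, the allocation A is EFX_WC with respect to v if and only if the dual allocation A* (with A*_i = T \ A_i) is EFX_WC for chores with respect to −v. -/
open Finset

variable {τ : Type*} [Fintype τ] [DecidableEq τ]

def EFXwcGoods {n : ℕ} (v : Fin n → τ → ℝ) (A : Fin n → Finset τ) : Prop :=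
  ∀ i j, ∀ g ∈ A j \ A i,
    vOf (v i) ((A j \ A i).erase g) ≤ vOf (v i) (A i \ A j)

def EFXwcChores {n : ℕ} (v : Fin n → τ → ℝ) (A : Fin n → Finset τ) : Prop :=
  ∀ i j, ∀ c ∈ A i \ A j,
    vOf (v i) (A j \ A i) ≤ vOf (v i) ((A i \ A j).erase c)

/-! Passing to complements swaps the two differences, `A*_i \ A*_j = A_j \ A_i`, and negating
the valuation reverses every inequality, so the chore condition for `(A*, -v)` at `(i, j, c)` is
literally the goods condition for `(A, v)` at `(i, j, c)`. -/

omit [Fintype τ] [DecidableEq τ] in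
@[simp]
theorem vOf_neg (w : τ → ℝ) (S : Finset τ) : vOf (fun t => -w t) S = -vOf w S :=
  Finset.sum_neg_distrib _

@[simp]
theorem dualAlloc_sdiff_dualAlloc {n : ℕ} (A : Fin n → Finset τ) (i j : Fin n) :
    dualAlloc A i \ dualAlloc A j = A j \ A i :=
  sdiff_sdiff_sdiff_cancel_left (subset_univ (A j))

/-- A is EFX_WC for goods w.r.t. v iff the dual allocation is
EFX_WC for chores w.r.t. -v. -/
theorem efxwc_dual {n : ℕ} (v : Fin n → τ → ℝ) (A : Fin n → Finset τ) :
    EFXwcGoods v A ↔ EFXwcChores (fun i t => -(v i t)) (dualAlloc A) := by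
  simp only [EFXwcGoods, EFXwcChores, dualAlloc_sdiff_dualAlloc, vOf_neg, neg_le_neg_iff]
end

section
/- For n ≥ 3 agents with identical additive valuations, n+1 goods where good g_w has value w for w ≤ n and value n² for w = n+1, and k copies of each good with n/2 < k < n, no exclusive EFX allocation exists; moreover no exclusive EFL allocation exists. -/
open Finset

variable {τ : Type*} [Fintype τ] [DecidableEq τ]

def EFX {n : ℕ} (v : Fin n → τ → ℝ) (A : Fin n → Finset τ) : Prop :=
  ∀ i j, ∀ g ∈ A j, vOf (v i) ((A j).erase g) ≤ vOf (v i) (A i)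

def EFL {n : ℕ} (v : Fin n → τ → ℝ) (A : Fin n → Finset τ) : Prop :=
  ∀ i j, (A j).card ≤ 1 ∨
    ∃ g ∈ A j, vOf (v i) ((A j).erase g) ≤ vOf (v i) (A i) ∧ v i g ≤ vOf (v i) (A i)

/-!
The good of value `n²` is worth more than all other goods together, since
`1 + 2 + ⋯ + n < n²`. As only `k < n` agents receive a copy of it, some agent `i` does not,
and `i` would violate EFL (hence EFX) towards any holder of the big good whose bundle contains
anything else. So every holder of the big good holds nothing else; in particular the `k` holders
of the big good and the `k` holders of the good of value `1` are disjoint, contradicting `2k > n`.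
-/

section Valuation

variable {α : Type*} {v : α → ℝ} {S T : Finset α}

theorem vOf_mono (hv : 0 ≤ v) (hST : S ⊆ T) : vOf v S ≤ vOf v T :=
  sum_le_sum_of_subset_of_nonneg hST fun t _ _ => hv t

theorem le_vOf_of_mem (hv : 0 ≤ v) {t : α} (ht : t ∈ S) : v t ≤ vOf v S :=
  single_le_sum (fun t _ => hv t) ht

end Valuation

section Allocation

variable {α : Type*} [DecidableEq α] {n : ℕ} {k : α → ℕ} {A : Fin n → Finset α}

theorem IsAlloc.exists_not_mem (hA : IsAlloc n k A) {t : α} (ht : k t < n) : ∃ i, t ∉ A i := by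
  by_contra! h
  have := hA t
  rw [filter_true_of_mem fun i _ => h i, card_univ, Fintype.card_fin] at this
  omega

theorem IsAlloc.add_le_of_forall_not_mem (hA : IsAlloc n k A) {s t : α}
    (hst : ∀ j, s ∈ A j → t ∉ A j) : k s + k t ≤ n := by
  rw [← hA s, ← hA t, ← card_union_of_disjoint (disjoint_filter.2 fun j _ => hst j)]
  exact (card_le_univ _).trans_eq (Fintype.card_fin n)

theorem EFX.efl {v : Fin n → α → ℝ} (hv : ∀ i, 0 ≤ v i) (h : EFX v A) : EFL v A := by
  intro i j
  refine (le_or_gt (A j).card 1).imp id fun hcard => ?_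
  obtain ⟨g, hg, g', hg', hne⟩ := one_lt_card.1 hcard
  refine ⟨g', hg', h i j g' hg', ?_⟩
  calc v i g' ≤ vOf (v i) ((A j).erase g) := le_vOf_of_mem (hv i) (mem_erase.2 ⟨hne.symm, hg'⟩)
    _ ≤ vOf (v i) (A i) := h i j g hg

theorem EFL.eq_singleton_of_mem [Fintype α] {v : Fin n → α → ℝ} (h : EFL v A) {b : α}
    {i j : Fin n} (hv : 0 ≤ v i) (hb : vOf (v i) (univ.erase b) < v i b) (hi : b ∉ A i) (hj : b ∈ A j) :
    A j = {b} := by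
  have hlt : vOf (v i) (A i) < v i b :=
    (vOf_mono hv (subset_erase.2 ⟨subset_univ _, hi⟩)).trans_lt hb
  rcases h i j with hcard | ⟨g, hg, herase, hg_le⟩
  · exact eq_singleton_iff_unique_mem.2 ⟨hj, fun x hx => card_le_one.1 hcard x hx b hj⟩
  · exfalso
    by_cases hgb : g = b
    · subst hgb
      linarith
    · linarith [le_vOf_of_mem hv (mem_erase.2 ⟨Ne.symm hgb, hj⟩)]

end Allocation

theorem sum_fin_add_one_mul_two (n : ℕ) : (∑ i : Fin n, ((i : ℝ) + 1)) * 2 = n * (n + 1) := by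
  rw [Fin.sum_univ_eq_sum_range (fun i => (i : ℝ) + 1)]
  induction n with
  | zero => simp
  | succ n ih => rw [sum_range_succ, add_mul, ih]; push_cast; ring

theorem vOf_erase_last_lt {n : ℕ} (hn : 2 ≤ n) {v : Fin (n + 1) → ℝ}
    (hv : ∀ w : Fin (n + 1), v w = if (w : ℕ) = n then (n : ℝ) ^ 2 else ((w : ℕ) + 1 : ℝ)) :
    vOf v (univ.erase (Fin.last n)) < v (Fin.last n) := by
  have hlast : v (Fin.last n) = (n : ℝ) ^ 2 := by simp [hv]
  have hrest : vOf v (univ.erase (Fin.last n)) = ∑ i : Fin n, ((i : ℝ) + 1) := by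
    have := Fin.sum_univ_castSucc v
    rw [← sum_erase_add _ _ (mem_univ (Fin.last n)), add_left_inj] at this
    rw [vOf, this]
    exact sum_congr rfl fun i _ => by simp [hv, i.isLt.ne]
  have hn' : (2 : ℝ) ≤ n := by exact_mod_cast hn
  rw [hlast, hrest]
  nlinarith [sum_fin_add_one_mul_two n]

/-- With n ≥ 3 agents, identical valuations over n+1 goods
(good w has value w+1 for w < n, and value n² for w = n), and k copies of
each good with n/2 < k < n, no exclusive EFX allocation exists, and no
exclusive EFL allocation exists. -/
theorem no_efx_no_efl_with_copies {n k : ℕ} (hn : 3 ≤ n)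
    (hk1 : n < 2 * k) (hk2 : k < n)
    (v : Fin (n + 1) → ℝ)
    (hv : ∀ w : Fin (n + 1), v w = if (w : ℕ) = n then (n : ℝ) ^ 2 else ((w : ℕ) + 1 : ℝ)) :
    (¬ ∃ A : Fin n → Finset (Fin (n + 1)),
        IsAlloc n (fun _ => k) A ∧ EFX (fun _ => v) A) ∧
    (¬ ∃ A : Fin n → Finset (Fin (n + 1)),
        IsAlloc n (fun _ => k) A ∧ EFL (fun _ => v) A) := by
  have hv0 : 0 ≤ v := fun w => by rw [hv w]; split_ifs <;> positivity
  have no_efl : ¬ ∃ A : Fin n → Finset (Fin (n + 1)),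
      IsAlloc n (fun _ => k) A ∧ EFL (fun _ => v) A := by
    rintro ⟨A, hA, hEFL⟩
    obtain ⟨i, hi⟩ := hA.exists_not_mem (t := Fin.last n) hk2
    have : k + k ≤ n := hA.add_le_of_forall_not_mem (s := Fin.last n) (t := 0) fun j hj => by
      rw [hEFL.eq_singleton_of_mem hv0 (vOf_erase_last_lt (by omega) hv) hi hj, mem_singleton]
      simp only [Fin.ext_iff, Fin.val_zero, Fin.val_last]; omega
    omega
  exact ⟨fun ⟨A, hA, hEFX⟩ => no_efl ⟨A, hA, hEFX.efl fun _ => hv0⟩, no_efl⟩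
end

section
/- In an EFX_WC exclusive allocation A with additive valuations, for any agents α and i: (1) if |A_i \ A_α| = 2, then every good g ∈ A_i \ A_α satisfies v_α(g) ≤ v_α(A_α); (2) if |A_i \ A_α| ≥ 3, then v_α(A_i \ A_α) ≤ (3/2)·v_α(A_α). -/
/-!
EFX_WC applied to α against i says that every good removed from `A i \ A α` leaves a bundle worth
at most `v_α(A α \ A i) ≤ v_α(A α)`. With two goods, the other good alone is such a bundle. With
`m ≥ 3` goods, remove the cheapest one: it is worth at most `1/m` of the whole, so the whole is
worth at most `m/(m-1) ≤ 3/2` times `v_α(A α)`.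
-/

open Finset

variable {τ : Type*} [Fintype τ] [DecidableEq τ]

def EFXwc {n : ℕ} (v : Fin n → τ → ℝ) (A : Fin n → Finset τ) : Prop :=
  ∀ i j, ∀ g ∈ A j \ A i,
    vOf (v i) ((A j \ A i).erase g) ≤ vOf (v i) (A i \ A j)

namespace Finset

variable {ι 𝕜 : Type*} [DecidableEq ι] [Field 𝕜] [LinearOrder 𝕜] [IsStrictOrderedRing 𝕜]
  {s : Finset ι} {f : ι → 𝕜} {B : 𝕜}

theorem le_of_forall_sum_erase_le (hf : ∀ x ∈ s, 0 ≤ f x)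
    (hB : ∀ a ∈ s, ∑ x ∈ s.erase a, f x ≤ B) (hs : 2 ≤ #s) {a : ι} (ha : a ∈ s) : f a ≤ B := by
  obtain ⟨b, hb, hba⟩ := s.exists_mem_ne hs a
  calc f a ≤ ∑ x ∈ s.erase b, f x :=
        single_le_sum (fun x hx => hf x (mem_of_mem_erase hx)) (mem_erase.2 ⟨hba.symm, ha⟩)
    _ ≤ B := hB b hb

theorem card_sub_one_mul_sum_le_of_forall_sum_erase_le
    (hB : ∀ a ∈ s, ∑ x ∈ s.erase a, f x ≤ B) : (#s - 1 : 𝕜) * ∑ x ∈ s, f x ≤ #s * B := by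
  rcases s.eq_empty_or_nonempty with rfl | hne
  · simp
  obtain ⟨a, ha, hmin⟩ := s.exists_min_image f hne
  have hcard : (#s : 𝕜) * f a ≤ ∑ x ∈ s, f x := by
    simpa [nsmul_eq_mul] using s.card_nsmul_le_sum f (f a) hmin
  have hsplit : f a + ∑ x ∈ s.erase a, f x = ∑ x ∈ s, f x := s.add_sum_erase f ha
  have hcard_pos : (0 : 𝕜) ≤ #s := Nat.cast_nonneg _
  nlinarith [hB a ha]

theorem sum_le_three_halves_mul_of_forall_sum_erase_le (hB₀ : 0 ≤ B)
    (hB : ∀ a ∈ s, ∑ x ∈ s.erase a, f x ≤ B) (hs : 3 ≤ #s) :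
    ∑ x ∈ s, f x ≤ 3 / 2 * B := by
  have h := card_sub_one_mul_sum_le_of_forall_sum_erase_le hB
  have hs' : (3 : 𝕜) ≤ #s := by exact_mod_cast hs
  -- `(#s - 1) (2 Σ - 3 B) ≤ (3 - #s) B ≤ 0`
  nlinarith

end Finset

theorem vOf_le_vOf_of_subset {σ : Type*} {v : σ → ℝ} (hv : ∀ t, 0 ≤ v t) {S T : Finset σ}
    (hST : S ⊆ T) : vOf v S ≤ vOf v T :=
  sum_le_sum_of_subset_of_nonneg hST fun t _ _ => hv t

theorem EFXwc.vOf_sdiff_erase_le {σ : Type*} [DecidableEq σ] {n : ℕ} {v : Fin n → σ → ℝ}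
    {A : Fin n → Finset σ} (hefx : EFXwc v A) {α : Fin n} (hv : ∀ t, 0 ≤ v α t) (i : Fin n)
    {g : σ} (hg : g ∈ A i \ A α) : vOf (v α) ((A i \ A α).erase g) ≤ vOf (v α) (A α) :=
  (hefx α i g hg).trans (vOf_le_vOf_of_subset hv sdiff_subset)

theorem efxwc_bundle_bounds_general {n : ℕ} {v : Fin n → τ → ℝ}
    {A : Fin n → Finset τ} (hv : ∀ i t, 0 ≤ v i t)
    (hefx : EFXwc v A) (α i : Fin n) :
    ((A i \ A α).card = 2 → ∀ g ∈ A i \ A α, v α g ≤ vOf (v α) (A α)) ∧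
    (3 ≤ (A i \ A α).card →
      vOf (v α) (A i \ A α) ≤ (3 / 2) * vOf (v α) (A α)) := by
  have hB := fun g (hg : g ∈ A i \ A α) => hefx.vOf_sdiff_erase_le (hv α) i hg
  refine ⟨fun hcard g hg => ?_, fun hcard => ?_⟩
  · exact le_of_forall_sum_erase_le (fun t _ => hv α t) hB hcard.ge hg
  · exact sum_le_three_halves_mul_of_forall_sum_erase_le
      (sum_nonneg fun t _ => hv α t) hB hcard

/-- In an EFX_WC allocation with additive nonnegative
valuations: (1) if |A_i \ A_α| = 2 then each good there has value at most
v_α(A_α); (2) if |A_i \ A_α| ≥ 3 then v_α(A_i \ A_α) ≤ (3/2)·v_α(A_α). -/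
theorem efxwc_bundle_bounds {n : ℕ} {k : τ → ℕ} {v : Fin n → τ → ℝ}
    {A : Fin n → Finset τ} (hv : ∀ i t, 0 ≤ v i t)
    (hA : IsAlloc n k A) (hefx : EFXwc v A) (α i : Fin n) :
    ((A i \ A α).card = 2 → ∀ g ∈ A i \ A α, v α g ≤ vOf (v α) (A α)) ∧
    (3 ≤ (A i \ A α).card →
      vOf (v α) (A i \ A α) ≤ (3 / 2) * vOf (v α) (A α)) :=
  efxwc_bundle_bounds_general hv hefx α i
end

section
/- For goods with copies and additive valuations, every EFL_WC exclusive allocation guarantees each agent at least a 1/3 fraction of her maximin share: v_i(A_i) ≥ (1/3)·MMS_i for every agent i. -/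
open Finset

variable {τ : Type*} [Fintype τ] [DecidableEq τ]

def EFLwc {n : ℕ} (v : Fin n → τ → ℝ) (A : Fin n → Finset τ) : Prop :=
  ∀ i j, (A j \ A i).card ≤ 1 ∨
    ∃ g ∈ A j \ A i,
      vOf (v i) ((A j \ A i).erase g) ≤ vOf (v i) (A i \ A j) ∧
      v i g ≤ vOf (v i) (A i \ A j)

noncomputable def MMS (n : ℕ) (k : τ → ℕ) (v : τ → ℝ) : ℝ :=
  ⨆ B : {B : Fin n → Finset τ // IsAlloc n k B}, ⨅ j, vOf v (B.1 j)

/-!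
Fix agent `i`, write `a = vᵢ(Aᵢ)`, and call a good outside `Aᵢ` big if `vᵢ` values it above `a`
and small otherwise. EFL_WC towards `Aⱼ` forces: if `Aⱼ` holds a big good, then `Aⱼ \ Aᵢ` is
exactly that good; otherwise `vᵢ(Aⱼ \ Aᵢ) ≤ 2a`. So at most one big copy sits in each bundle,
and the `p ≥ 1` agents (among them `i`) holding none carry small copies worth at most `2a` each.
In any other exclusive allocation `B` the same copies of big goods meet at most `n - p` bundles,
so at least `p` bundles `Bₗ` consist of goods of `Aᵢ` and small goods, the latter worth at least
`vᵢ(Bₗ) - a ≥ m - a`, where `m = minₗ vᵢ(Bₗ)`. Comparing the total value of small copies in the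
two allocations gives `p (m - a) ≤ 2 p a`, i.e. `m ≤ 3a`.
-/

section

omit [Fintype τ]

variable {w : τ → ℝ}

omit [DecidableEq τ] in
lemma vOf_nonneg (hw : ∀ t, 0 ≤ w t) (S : Finset τ) : 0 ≤ vOf w S :=
  sum_nonneg fun t _ => hw t

omit [DecidableEq τ] in
lemma vOf_mono_s14 (hw : ∀ t, 0 ≤ w t) {S T : Finset τ} (h : S ⊆ T) : vOf w S ≤ vOf w T :=
  sum_le_sum_of_subset_of_nonneg h fun t _ _ => hw t

lemma vOf_le_add_vOf_sdiff (hw : ∀ t, 0 ≤ w t) (S X : Finset τ) :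
    vOf w S ≤ vOf w X + vOf w (S \ X) := by
  have hSX : vOf w (S ∩ X) ≤ vOf w X := vOf_mono_s14 hw inter_subset_right
  have hsplit := sum_inter_add_sum_sdiff S X w
  unfold vOf at *
  linarith

lemma card_not_disjoint_le_sum_card_inter {ι : Type*} [Fintype ι] (C : ι → Finset τ)
    (G : Finset τ) : #{l | ¬Disjoint (C l) G} ≤ ∑ l, #(C l ∩ G) := by
  rw [card_eq_sum_ones, sum_filter]
  refine sum_le_sum fun l _ => ?_
  split_ifs with h
  · exact Nat.zero_le _
  · exact card_pos.2 (not_disjoint_iff_nonempty_inter.1 h)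

lemma sum_card_inter_le_card_not_disjoint {ι : Type*} [Fintype ι] {C : ι → Finset τ}
    {G : Finset τ} (hC : ∀ l, #(C l ∩ G) ≤ 1) : ∑ l, #(C l ∩ G) ≤ #{l | ¬Disjoint (C l) G} := by
  rw [card_eq_sum_ones, sum_filter]
  refine sum_le_sum fun l _ => ?_
  split_ifs with h
  · simp [disjoint_iff_inter_eq_empty.1 h]
  · exact hC l

variable {n : ℕ} {k : τ → ℕ}

lemma IsAlloc.sum_sum_inter {M : Type*} [AddCommMonoid M] {A : Fin n → Finset τ}
    (hA : IsAlloc n k A) (f : τ → M) (G : Finset τ) :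
    ∑ l, ∑ t ∈ A l ∩ G, f t = ∑ t ∈ G, k t • f t := by
  simp_rw [inter_comm _ G, ← filter_mem_eq_inter, sum_filter]
  rw [sum_comm]
  refine sum_congr rfl fun t _ => ?_
  rw [← sum_filter, sum_const, hA t]

lemma IsAlloc.sum_sum_inter_eq {M : Type*} [AddCommMonoid M] {A B : Fin n → Finset τ}
    (hA : IsAlloc n k A) (hB : IsAlloc n k B) (f : τ → M) (G : Finset τ) :
    ∑ l, ∑ t ∈ A l ∩ G, f t = ∑ l, ∑ t ∈ B l ∩ G, f t := by
  rw [hA.sum_sum_inter, hB.sum_sum_inter]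

lemma EFLwc.vOf_sdiff_le_two_mul {v : Fin n → τ → ℝ} {A : Fin n → Finset τ}
    (hefl : EFLwc v A) {i j : Fin n} (hv : ∀ t, 0 ≤ v i t)
    (hsmall : ∀ t ∈ A j \ A i, v i t ≤ vOf (v i) (A i)) :
    vOf (v i) (A j \ A i) ≤ 2 * vOf (v i) (A i) := by
  have ha := vOf_nonneg hv (A i)
  have hown : vOf (v i) (A i \ A j) ≤ vOf (v i) (A i) := vOf_mono_s14 hv sdiff_subset
  rcases hefl i j with hcard | ⟨g, hg, hrest, hg_le⟩
  · calc vOf (v i) (A j \ A i) ≤ #(A j \ A i) • vOf (v i) (A i) :=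
          sum_le_card_nsmul _ _ _ hsmall
      _ ≤ 1 • vOf (v i) (A i) := by gcongr
      _ ≤ 2 * vOf (v i) (A i) := by rw [one_nsmul]; linarith
  · have := sum_erase_add _ (v i) hg
    unfold vOf at *
    linarith

end

section

variable {w : τ → ℝ}

noncomputable def bigGoods (w : τ → ℝ) (X : Finset τ) : Finset τ :=
  {t | t ∉ X ∧ vOf w X < w t}

noncomputable def smallGoods (w : τ → ℝ) (X : Finset τ) : Finset τ :=
  {t | t ∉ X ∧ w t ≤ vOf w X}

lemma mem_bigGoods {X : Finset τ} {t : τ} : t ∈ bigGoods w X ↔ t ∉ X ∧ vOf w X < w t := by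
  simp [bigGoods]

lemma mem_smallGoods {X : Finset τ} {t : τ} : t ∈ smallGoods w X ↔ t ∉ X ∧ w t ≤ vOf w X := by
  simp [smallGoods]

lemma disjoint_bigGoods (X : Finset τ) : Disjoint X (bigGoods w X) :=
  disjoint_left.2 fun _ htX ht => (mem_bigGoods.1 ht).1 htX

lemma le_vOf_of_notMem_bigGoods {X : Finset τ} {t : τ} (htX : t ∉ X)
    (ht : t ∉ bigGoods w X) : w t ≤ vOf w X := by
  simpa [mem_bigGoods, htX] using ht

lemma inter_smallGoods_subset_sdiff {S X : Finset τ} {t : τ} (ht : t ∈ S ∩ smallGoods w X) :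
    t ∈ S \ X :=
  mem_sdiff.2 ⟨(mem_inter.1 ht).1, (mem_smallGoods.1 (mem_inter.1 ht).2).1⟩

lemma sdiff_subset_inter_smallGoods {S X : Finset τ} (h : Disjoint S (bigGoods w X)) :
    S \ X ⊆ S ∩ smallGoods w X := by
  intro t ht
  obtain ⟨htS, htX⟩ := mem_sdiff.1 ht
  exact mem_inter.2 ⟨htS, mem_smallGoods.2
    ⟨htX, le_vOf_of_notMem_bigGoods htX (disjoint_left.1 h htS)⟩⟩

lemma vOf_sub_le_vOf_inter_smallGoods (hw : ∀ t, 0 ≤ w t) {S X : Finset τ}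
    (h : Disjoint S (bigGoods w X)) :
    vOf w S - vOf w X ≤ vOf w (S ∩ smallGoods w X) := by
  have := vOf_mono_s14 hw (sdiff_subset_inter_smallGoods h)
  linarith [vOf_le_add_vOf_sdiff hw S X]

lemma card_disjoint_bigGoods_mul_le {ι : Type*} [Fintype ι] (hw : ∀ t, 0 ≤ w t)
    (B : ι → Finset τ) (X : Finset τ) {m : ℝ} (hm : ∀ l, m ≤ vOf w (B l)) :
    #{l | Disjoint (B l) (bigGoods w X)} * (m - vOf w X) ≤
      ∑ l, vOf w (B l ∩ smallGoods w X) := by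
  rw [← nsmul_eq_mul]
  calc _ ≤ ∑ l ∈ {l | Disjoint (B l) (bigGoods w X)}, vOf w (B l ∩ smallGoods w X) :=
        card_nsmul_le_sum _ _ _ fun l hl => by
          linarith [hm l, vOf_sub_le_vOf_inter_smallGoods hw (mem_filter.1 hl).2]
    _ ≤ _ := sum_le_sum_of_subset_of_nonneg (subset_univ _) fun l _ _ => vOf_nonneg hw _

end

namespace EFLwc

variable {n : ℕ} {v : Fin n → τ → ℝ} {A : Fin n → Finset τ}

lemma sdiff_eq_singleton (hefl : EFLwc v A) {i j : Fin n} (hv : ∀ t, 0 ≤ v i t) {t : τ}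
    (htj : t ∈ A j) (ht : t ∈ bigGoods (v i) (A i)) : A j \ A i = {t} := by
  rw [mem_bigGoods] at ht
  have htd : t ∈ A j \ A i := mem_sdiff.2 ⟨htj, ht.1⟩
  have hown : vOf (v i) (A i \ A j) ≤ vOf (v i) (A i) := vOf_mono_s14 hv sdiff_subset
  rcases hefl i j with hcard | ⟨g, hg, hrest, hg_le⟩
  · exact eq_singleton_iff_unique_mem.2 ⟨htd, fun u hu => card_le_one.1 hcard u hu t htd⟩
  · exfalso
    obtain rfl | htg := eq_or_ne t g
    · linarith [ht.2]
    · have : v i t ≤ vOf (v i) ((A j \ A i).erase g) :=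
        single_le_sum (fun u _ => hv u) (mem_erase.2 ⟨htg, htd⟩)
      linarith [ht.2]

lemma card_inter_bigGoods_le_one (hefl : EFLwc v A) (i : Fin n) (hv : ∀ t, 0 ≤ v i t)
    (l : Fin n) : #(A l ∩ bigGoods (v i) (A i)) ≤ 1 := by
  refine card_le_one.2 fun u hu t ht => ?_
  obtain ⟨htl, htG⟩ := mem_inter.1 ht
  obtain ⟨hul, huG⟩ := mem_inter.1 hu
  have hu' : u ∈ A l \ A i := mem_sdiff.2 ⟨hul, (mem_bigGoods.1 huG).1⟩
  rwa [hefl.sdiff_eq_singleton hv htl htG, mem_singleton] at hu'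

lemma card_disjoint_bigGoods_le (hefl : EFLwc v A) {k : τ → ℕ} (hA : IsAlloc n k A)
    {B : Fin n → Finset τ} (hB : IsAlloc n k B) (i : Fin n) (hv : ∀ t, 0 ≤ v i t) :
    #{l | Disjoint (A l) (bigGoods (v i) (A i))} ≤
      #{l | Disjoint (B l) (bigGoods (v i) (A i))} := by
  set G := bigGoods (v i) (A i)
  have hcopies : ∑ l, #(B l ∩ G) = ∑ l, #(A l ∩ G) := by
    simpa only [card_eq_sum_ones] using hB.sum_sum_inter_eq hA (fun _ => 1) G
  have hB_le := card_not_disjoint_le_sum_card_inter B G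
  have hA_ge : ∑ l, #(A l ∩ G) ≤ #{l | ¬Disjoint (A l) G} :=
    sum_card_inter_le_card_not_disjoint (hefl.card_inter_bigGoods_le_one i hv)
  have hA_split := card_filter_add_card_filter_not (s := univ) fun l => Disjoint (A l) G
  have hB_split := card_filter_add_card_filter_not (s := univ) fun l => Disjoint (B l) G
  omega

lemma inter_smallGoods_eq_empty (hefl : EFLwc v A) {i l : Fin n} (hv : ∀ t, 0 ≤ v i t)
    (hl : ¬Disjoint (A l) (bigGoods (v i) (A i))) : A l ∩ smallGoods (v i) (A i) = ∅ := by
  obtain ⟨t, htl, htG⟩ := not_disjoint_iff.1 hl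
  refine eq_empty_of_forall_notMem fun u hu => ?_
  have hu' := inter_smallGoods_subset_sdiff hu
  rw [hefl.sdiff_eq_singleton hv htl htG, mem_singleton] at hu'
  subst hu'
  linarith [(mem_smallGoods.1 (mem_inter.1 hu).2).2, (mem_bigGoods.1 htG).2]

lemma sum_vOf_inter_smallGoods_le (hefl : EFLwc v A) (i : Fin n) (hv : ∀ t, 0 ≤ v i t) :
    ∑ l, vOf (v i) (A l ∩ smallGoods (v i) (A i)) ≤
      #{l | Disjoint (A l) (bigGoods (v i) (A i))} * (2 * vOf (v i) (A i)) := by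
  have hsupp : ∀ l ∈ univ, vOf (v i) (A l ∩ smallGoods (v i) (A i)) ≠ 0 →
      Disjoint (A l) (bigGoods (v i) (A i)) := fun l _ hne => by
    by_contra hl
    simp [hefl.inter_smallGoods_eq_empty hv hl, vOf] at hne
  rw [← sum_filter_of_ne hsupp, ← nsmul_eq_mul]
  refine sum_le_card_nsmul _ _ _ fun l hl => ?_
  have hl := (mem_filter.1 hl).2
  calc vOf (v i) (A l ∩ smallGoods (v i) (A i)) ≤ vOf (v i) (A l \ A i) :=
        vOf_mono_s14 hv fun _ => inter_smallGoods_subset_sdiff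
    _ ≤ 2 * vOf (v i) (A i) := hefl.vOf_sdiff_le_two_mul hv fun t ht =>
        le_vOf_of_notMem_bigGoods (mem_sdiff.1 ht).2 (disjoint_left.1 hl (mem_sdiff.1 ht).1)

lemma iInf_vOf_le_three_mul (hefl : EFLwc v A) {k : τ → ℕ} (hA : IsAlloc n k A)
    {B : Fin n → Finset τ} (hB : IsAlloc n k B) (i : Fin n) (hv : ∀ t, 0 ≤ v i t) :
    ⨅ l, vOf (v i) (B l) ≤ 3 * vOf (v i) (A i) := by
  set a := vOf (v i) (A i)
  set m := ⨅ l, vOf (v i) (B l)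
  set G := bigGoods (v i) (A i)
  set Sm := smallGoods (v i) (A i)
  set p := #{l | Disjoint (A l) G}
  set q := #{l | Disjoint (B l) G}
  have hpq : p ≤ q := hefl.card_disjoint_bigGoods_le hA hB i hv
  have hp : 0 < p := card_pos.2 ⟨i, mem_filter.2 ⟨mem_univ i, disjoint_bigGoods (A i)⟩⟩
  have hcopies : ∑ l, vOf (v i) (B l ∩ Sm) = ∑ l, vOf (v i) (A l ∩ Sm) :=
    hB.sum_sum_inter_eq hA (v i) Sm
  have hlower : q * (m - a) ≤ ∑ l, vOf (v i) (B l ∩ Sm) :=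
    card_disjoint_bigGoods_mul_le hv B (A i) fun l => ciInf_le (Finite.bddBelow_range _) l
  have hupper : ∑ l, vOf (v i) (A l ∩ Sm) ≤ p * (2 * a) := hefl.sum_vOf_inter_smallGoods_le i hv
  rcases le_or_gt m a with hma | hma
  · linarith [vOf_nonneg hv (A i)]
  · have hcmp : (p : ℝ) * (m - a) ≤ p * (2 * a) :=
      calc (p : ℝ) * (m - a) ≤ q * (m - a) := by gcongr
        _ ≤ p * (2 * a) := by linarith
    linarith [le_of_mul_le_mul_left hcmp (by exact_mod_cast hp)]

end EFLwc

/-- Every EFL_WC exclusive allocation of goods with copies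
guarantees each agent at least 1/3 of her maximin share. -/
theorem eflwc_mms_bound {n : ℕ} {k : τ → ℕ} {v : Fin n → τ → ℝ}
    {A : Fin n → Finset τ} (hv : ∀ i t, 0 ≤ v i t)
    (hA : IsAlloc n k A) (hefl : EFLwc v A) :
    ∀ i, (1 / 3) * MMS n k (v i) ≤ vOf (v i) (A i) := by
  intro i
  have : Nonempty {B : Fin n → Finset τ // IsAlloc n k B} := ⟨⟨A, hA⟩⟩
  have hMMS : MMS n k (v i) ≤ 3 * vOf (v i) (A i) :=
    ciSup_le fun B => hefl.iInf_vOf_le_three_mul hA B.2 i (hv i)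
  linarith
end

section
/- There exists an instance of goods with copies (2ℓ+1 agents for ℓ ≥ 3) and an EFL_WC exclusive allocation in which some agent receives value 1 while her maximin share is at least 3 − 2/ℓ; hence EFL_WC cannot guarantee more than a 1/3 fraction of MMS. -/
open Finset

variable {τ : Type*} [Fintype τ] [DecidableEq τ]

/-- Goods: H, x, x', y_1..y_ℓ, z_1..z_ℓ. -/
abbrev Gd (ℓ : ℕ) : Type := Unit ⊕ Unit ⊕ Unit ⊕ Fin ℓ ⊕ Fin ℓ

/-- Number of copies: H has ℓ, x has ℓ+1, x' has ℓ, each y_i and z_i has 1. -/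
def copies (ℓ : ℕ) : Gd ℓ → ℕ :=
  Sum.elim (fun _ => ℓ) (Sum.elim (fun _ => ℓ + 1)
    (Sum.elim (fun _ => ℓ) (Sum.elim (fun _ => 1) (fun _ => 1))))

/-- Distinguished agent'"'"'s valuation: H ↦ 3, x ↦ 1, x' ↦ 1, y_i ↦ 1 - 2/ℓ, z_i ↦ 2/ℓ. -/
noncomputable def vspec (ℓ : ℕ) : Gd ℓ → ℝ :=
  Sum.elim (fun _ => 3) (Sum.elim (fun _ => 1)
    (Sum.elim (fun _ => 1) (Sum.elim (fun _ => 1 - 2 / ℓ) (fun _ => 2 / ℓ))))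

/-- The last agent is distinguished; all other agents value every good as 1. -/
noncomputable def vEx (ℓ : ℕ) : Fin (2 * ℓ + 1) → Gd ℓ → ℝ :=
  fun i g => if (i : ℕ) = 2 * ℓ then vspec ℓ g else 1

/-! The allocation gives `ℓ` agents `{H, x}`, `ℓ` agents `{x', yₐ, zₐ}` and the distinguished
agent `{x}`. Every agent of the first two kinds values all goods at `1` and holds at least two goods
while nobody holds more than three, so envy towards any bundle disappears after removing one good.
The distinguished agent only sees bundles `{x', yₐ, zₐ}` with goods outside `{x}`; without `x'` such
a bundle is worth `(1 - 2/ℓ) + 2/ℓ = 1` to her. Yet she can split the goods into `ℓ` bundles `{H}`,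
`ℓ` bundles `{x, x', yₐ}` and the bundle `{x, z₁, …, z_ℓ}`, each worth at least `3 - 2/ℓ`. -/

theorem vOf_eq_card {α : Type*} {v : α → ℝ} (hv : ∀ g, v g = 1) (S : Finset α) :
    vOf v S = #S := by
  simp [vOf, hv]

section

variable {α : Type*} [DecidableEq α]

theorem isAlloc_comp_symm {n : ℕ} {ι : Type*} [Fintype ι] (e : ι ≃ Fin n) {k : α → ℕ}
    {A : ι → Finset α} (hA : ∀ t, #{i | t ∈ A i} = k t) : IsAlloc n k (A ∘ e.symm) := by
  intro t
  rw [← hA t]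
  exact card_equiv e.symm (by simp)

theorem le_MMS {n : ℕ} [NeZero n] [Finite α] {k : α → ℕ} {v : α → ℝ} {B : Fin n → Finset α}
    (hB : IsAlloc n k B) {c : ℝ} (hc : ∀ j, c ≤ vOf v (B j)) : c ≤ MMS n k v :=
  le_ciSup_of_le (Set.finite_range _).bddAbove ⟨B, hB⟩ (le_ciInf hc)

theorem eflwc_pair_of_card_le {v : α → ℝ} (hv : ∀ g, v g = 1) {S T : Finset α}
    (h : #T ≤ #S + 1) :
    #(T \ S) ≤ 1 ∨ ∃ g ∈ T \ S, vOf v ((T \ S).erase g) ≤ vOf v (S \ T) ∧ v g ≤ vOf v (S \ T) := by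
  have hcard : #(T \ S) ≤ #(S \ T) + 1 := by
    have hT := card_sdiff_add_card_inter T S
    have hS := card_sdiff_add_card_inter S T
    rw [inter_comm] at hS
    omega
  rcases le_or_gt #(T \ S) 1 with hle | hgt
  · exact Or.inl hle
  obtain ⟨g, hg⟩ : (T \ S).Nonempty := card_pos.mp (by omega)
  refine Or.inr ⟨g, hg, ?_, ?_⟩
  · rw [vOf_eq_card hv, vOf_eq_card hv, card_erase_of_mem hg]
    exact_mod_cast (by omega)
  · rw [hv, vOf_eq_card hv]
    exact_mod_cast (by omega)

end

namespace Gd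

variable {ℓ : ℕ}

abbrev H : Gd ℓ := Sum.inl ()
abbrev x : Gd ℓ := Sum.inr (Sum.inl ())
abbrev x' : Gd ℓ := Sum.inr (Sum.inr (Sum.inl ()))
abbrev y (a : Fin ℓ) : Gd ℓ := Sum.inr (Sum.inr (Sum.inr (Sum.inl a)))
abbrev z (a : Fin ℓ) : Gd ℓ := Sum.inr (Sum.inr (Sum.inr (Sum.inr a)))

end Gd

/-- `Sum.inl (Sum.inl a)` is the agent `a`, `Sum.inl (Sum.inr a)` the agent `ℓ + a`, and
`Sum.inr 0` the distinguished agent `2ℓ`. -/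
abbrev Agent (ℓ : ℕ) : Type := (Fin ℓ ⊕ Fin ℓ) ⊕ Fin 1

def agentEquiv (ℓ : ℕ) : Agent ℓ ≃ Fin (2 * ℓ + 1) :=
  (finSumFinEquiv.sumCongr (Equiv.refl _)).trans (finSumFinEquiv.trans (finCongr (by omega)))

variable {ℓ : ℕ}

theorem vEx_agentEquiv_inl (p : Fin ℓ ⊕ Fin ℓ) : vEx ℓ (agentEquiv ℓ (.inl p)) = fun _ => 1 := by
  funext g
  rcases p with a | a <;> simp [vEx, agentEquiv] <;> omega

theorem vEx_agentEquiv_inr (o : Fin 1) : vEx ℓ (agentEquiv ℓ (.inr o)) = vspec ℓ := by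
  funext g
  simp [vEx, agentEquiv, Fin.fin_one_eq_zero o]

def eflAlloc (ℓ : ℕ) : Agent ℓ → Finset (Gd ℓ)
  | .inl (.inl _) => {Gd.H, Gd.x}
  | .inl (.inr a) => {Gd.x', Gd.y a, Gd.z a}
  | .inr _ => {Gd.x}

def mmsPartition (ℓ : ℕ) : Agent ℓ → Finset (Gd ℓ)
  | .inl (.inl _) => {Gd.H}
  | .inl (.inr a) => {Gd.x, Gd.x', Gd.y a}
  | .inr _ => insert Gd.x (univ.image Gd.z)

theorem card_holders_eflAlloc (t : Gd ℓ) : #{p | t ∈ eflAlloc ℓ p} = copies ℓ t := by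
  rw [card_filter, Fintype.sum_sum_type, Fintype.sum_sum_type]
  rcases t with _ | _ | _ | j | j <;> simp [eflAlloc, copies]

theorem card_holders_mmsPartition (t : Gd ℓ) : #{p | t ∈ mmsPartition ℓ p} = copies ℓ t := by
  rw [card_filter, Fintype.sum_sum_type, Fintype.sum_sum_type]
  rcases t with _ | _ | _ | j | j <;> simp [mmsPartition, copies]

theorem card_eflAlloc_le (p : Fin ℓ ⊕ Fin ℓ) (q : Agent ℓ) :
    #(eflAlloc ℓ q) ≤ #(eflAlloc ℓ (.inl p)) + 1 := by
  rcases p with a | a <;> rcases q with (b | b) | o <;> simp [eflAlloc]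

theorem eflwc_distinguished (q : Agent ℓ) :
    #(eflAlloc ℓ q \ {Gd.x}) ≤ 1 ∨ ∃ g ∈ eflAlloc ℓ q \ {Gd.x},
      vOf (vspec ℓ) ((eflAlloc ℓ q \ {Gd.x}).erase g) ≤ vOf (vspec ℓ) ({Gd.x} \ eflAlloc ℓ q) ∧
      vspec ℓ g ≤ vOf (vspec ℓ) ({Gd.x} \ eflAlloc ℓ q) := by
  rcases q with (a | a) | o
  · left; simp [eflAlloc]
  · right
    have hT : ({Gd.x', Gd.y a, Gd.z a} : Finset (Gd ℓ)) \ {Gd.x} = {Gd.x', Gd.y a, Gd.z a} := by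
      rw [sdiff_eq_self_of_disjoint]; simp
    have hS : ({Gd.x} : Finset (Gd ℓ)) \ {Gd.x', Gd.y a, Gd.z a} = {Gd.x} := by
      rw [sdiff_eq_self_of_disjoint]; simp
    refine ⟨Gd.x', by simp [eflAlloc], ?_, ?_⟩ <;> simp [eflAlloc, hT, hS, vOf, vspec]
  · left; simp [eflAlloc]

theorem eflwc_eflAlloc (ℓ : ℕ) : EFLwc (vEx ℓ) (eflAlloc ℓ ∘ (agentEquiv ℓ).symm) := by
  intro i j
  obtain ⟨p, rfl⟩ := (agentEquiv ℓ).surjective i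
  obtain ⟨q, rfl⟩ := (agentEquiv ℓ).surjective j
  simp only [Function.comp_apply, Equiv.symm_apply_apply]
  rcases p with p | o
  · rw [vEx_agentEquiv_inl]
    exact eflwc_pair_of_card_le (fun _ => rfl) (card_eflAlloc_le p q)
  · rw [vEx_agentEquiv_inr]
    exact eflwc_distinguished q

theorem le_vOf_mmsPartition (hℓ : ℓ ≠ 0) (q : Agent ℓ) :
    3 - 2 / ℓ ≤ vOf (vspec ℓ) (mmsPartition ℓ q) := by
  rcases q with (a | a) | o
  · simp [mmsPartition, vOf, vspec]; positivity
  · simp [mmsPartition, vOf, vspec]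
    linarith
  · have hz : ∑ a : Fin ℓ, vspec ℓ (Gd.z a) = 2 := by
      simp [vspec]
      field_simp
    rw [mmsPartition, vOf, sum_insert (by simp), sum_image fun a _ b _ h => by simpa using h, hz]
    norm_num [vspec]
    positivity

/-- For every ℓ ≥ 3 there is an EFL_WC exclusive allocation of
this instance in which some agent gets value 1 while her maximin share is at
least 3 - 2/ℓ; hence EFL_WC guarantees no more than 1/3 of MMS. -/
theorem eflwc_third_mms_tight (ℓ : ℕ) (hℓ : 3 ≤ ℓ) :
    ∃ A : Fin (2 * ℓ + 1) → Finset (Gd ℓ),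
      IsAlloc (2 * ℓ + 1) (copies ℓ) A ∧ EFLwc (vEx ℓ) A ∧
      ∃ i, vOf (vEx ℓ i) (A i) = 1 ∧
        3 - 2 / ℓ ≤ MMS (2 * ℓ + 1) (copies ℓ) (vEx ℓ i) := by
  set e := agentEquiv ℓ
  refine ⟨eflAlloc ℓ ∘ e.symm, isAlloc_comp_symm e card_holders_eflAlloc, eflwc_eflAlloc ℓ,
    e (.inr 0), ?_, ?_⟩
  · rw [vEx_agentEquiv_inr]
    simp [vOf, eflAlloc, vspec]
  · rw [vEx_agentEquiv_inr]
    refine le_MMS (isAlloc_comp_symm e card_holders_mmsPartition) fun j => ?_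
    simpa using le_vOf_mmsPartition (by omega) (e.symm j)
end

section
/- For n agents with identical additive valuations where goods L_1,…,L_n each have value 1 and goods H_1,…,H_{n−1} each have value n (one copy each), the allocation giving agent θ the bundle {H_θ, L_θ} for θ ≤ n−1 and agent n the bundle {L_n} is EF1_WC, yet agent n's value is 1 while her maximin share is n; hence EF1_WC guarantees no more than a 1/n fraction of MMS. -/
/-! The bundles {H_θ, L_θ} and {L_n} are pairwise disjoint; removing H_θ (or L_n) leaves at
most one good of value 1, while every bundle contains some L and so is worth at least 1: this is
EF1_WC. The goods are worth n + (n - 1) n = n² in total, so some bundle of every allocation is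
worth at most n, and giving each H_θ to agent θ and all of L_1, …, L_n to the last agent makes
every bundle worth exactly n: the maximin share is n. -/

open Finset

variable {τ : Type*} [Fintype τ] [DecidableEq τ]

def EF1wc {n : ℕ} (v : Fin n → τ → ℝ) (A : Fin n → Finset τ) : Prop :=
  ∀ i j, A j \ A i = ∅ ∨
    ∃ g ∈ A j \ A i, vOf (v i) ((A j \ A i).erase g) ≤ vOf (v i) (A i \ A j)

open Function

section Allocations

variable {α : Type*} {n : ℕ}

def fiberAlloc [Fintype α] (f : α → Fin n) : Fin n → Finset α :=
  fun i => univ.filter (f · = i)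

theorem isAlloc_fiberAlloc [Fintype α] [DecidableEq α] (f : α → Fin n) :
    IsAlloc n (fun _ => 1) (fiberAlloc f) := by
  intro t
  simp [fiberAlloc, filter_eq]

theorem pairwise_disjoint_fiberAlloc [Fintype α] (f : α → Fin n) :
    Pairwise (Disjoint on fiberAlloc f) := fun _ _ hij =>
  disjoint_filter.2 fun _ _ hi hj => hij (hi.symm.trans hj)

theorem sum_vOf_of_isAlloc [Fintype α] [DecidableEq α] {B : Fin n → Finset α}
    (hB : IsAlloc n (fun _ => 1) B) (v : α → ℝ) : ∑ j, vOf v (B j) = ∑ t, v t := by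
  simp only [vOf]
  rw [sum_comm' (t' := univ) (s' := fun t => univ.filter (t ∈ B ·)) (by simp)]
  refine sum_congr rfl fun t _ => ?_
  rw [sum_const, hB t, one_smul]

theorem MMS_eq_of_forall_vOf_eq [Fintype α] [DecidableEq α] (hn : 0 < n) {v : α → ℝ}
    {B : Fin n → Finset α} (hB : IsAlloc n (fun _ => 1) B) {c : ℝ}
    (hc : ∀ j, vOf v (B j) = c) :
    MMS n (fun _ => 1) v = c := by
  have : Nonempty (Fin n) := ⟨⟨0, hn⟩⟩
  have hinf : ∀ B' : {B : Fin n → Finset α // IsAlloc n (fun _ => 1) B},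
      ⨅ j, vOf v (B'.1 j) ≤ c := by
    intro B'
    have htotal : ∑ j, vOf v (B'.1 j) ≤ ∑ _j : Fin n, c := by
      simp only [sum_vOf_of_isAlloc B'.2, ← sum_vOf_of_isAlloc hB, hc, le_refl]
    obtain ⟨j, -, hj⟩ := exists_le_of_sum_le univ_nonempty htotal
    exact (ciInf_le (Finite.bddBelow_range _) j).trans hj
  have : Nonempty {B : Fin n → Finset α // IsAlloc n (fun _ => 1) B} := ⟨⟨B, hB⟩⟩
  refine le_antisymm (ciSup_le hinf) ?_
  calc c = ⨅ j, vOf v (B j) := by simp only [hc, ciInf_const]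
    _ ≤ MMS n (fun _ => 1) v := le_ciSup ⟨c, Set.forall_mem_range.2 hinf⟩ ⟨B, hB⟩

theorem EF1wc_of_pairwise_disjoint [DecidableEq α] {v : α → ℝ} {A : Fin n → Finset α}
    (hA : Pairwise (Disjoint on A)) {m : ℝ}
    (herase : ∀ j, ∃ g ∈ A j, vOf v ((A j).erase g) ≤ m) (hm : ∀ i, m ≤ vOf v (A i)) :
    EF1wc (fun _ => v) A := by
  intro i j
  obtain rfl | hij := eq_or_ne i j
  · exact .inl (Finset.sdiff_self _)
  rw [sdiff_eq_self_of_disjoint (hA hij.symm), sdiff_eq_self_of_disjoint (hA hij)]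
  obtain ⟨g, hg, hle⟩ := herase j
  exact .inr ⟨g, hg, hle.trans (hm i)⟩

end Allocations

section LowHigh

variable (n : ℕ)

def lowHighValue : Fin n ⊕ Fin (n - 1) → ℝ :=
  Sum.elim (fun _ => 1) (fun _ => n)

def pairAlloc : Fin n → Finset (Fin n ⊕ Fin (n - 1)) := fun i =>
  insert (Sum.inl i) (if h : (i : ℕ) < n - 1 then {Sum.inr ⟨i, h⟩} else ∅)

def pairOwner : Fin n ⊕ Fin (n - 1) → Fin n :=
  Sum.elim id (Fin.castLE (Nat.sub_le n 1))

def balancedOwner (hn : 0 < n) : Fin n ⊕ Fin (n - 1) → Fin n :=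
  Sum.elim (fun _ => ⟨n - 1, Nat.sub_lt hn one_pos⟩) (Fin.castLE (Nat.sub_le n 1))

theorem pairAlloc_eq_fiberAlloc : pairAlloc n = fiberAlloc (pairOwner n) := by
  ext i (a | b) <;> by_cases h : (i : ℕ) < n - 1 <;>
    simp [pairAlloc, fiberAlloc, pairOwner, h, Fin.ext_iff]
  omega

theorem isAlloc_pairAlloc : IsAlloc n (fun _ => 1) (pairAlloc n) :=
  pairAlloc_eq_fiberAlloc n ▸ isAlloc_fiberAlloc (pairOwner n)

theorem pairwise_disjoint_pairAlloc : Pairwise (Disjoint on pairAlloc n) :=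
  pairAlloc_eq_fiberAlloc n ▸ pairwise_disjoint_fiberAlloc (pairOwner n)

theorem one_le_vOf_pairAlloc (i : Fin n) : 1 ≤ vOf (lowHighValue n) (pairAlloc n i) :=
  single_le_sum (f := lowHighValue n) (fun t _ => by cases t <;> simp [lowHighValue])
    (mem_insert_self (Sum.inl i) _)

theorem vOf_pairAlloc_last (hn : 0 < n) :
    vOf (lowHighValue n) (pairAlloc n ⟨n - 1, Nat.sub_lt hn one_pos⟩) = 1 := by
  simp [pairAlloc, vOf, lowHighValue]

theorem exists_vOf_erase_pairAlloc_le_one (j : Fin n) :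
    ∃ g ∈ pairAlloc n j, vOf (lowHighValue n) ((pairAlloc n j).erase g) ≤ 1 := by
  by_cases h : (j : ℕ) < n - 1
  · refine ⟨Sum.inr ⟨j, h⟩, by simp [pairAlloc, h], ?_⟩
    simp [pairAlloc, h, vOf, lowHighValue]
  · refine ⟨Sum.inl j, by simp [pairAlloc], ?_⟩
    simp [pairAlloc, h, vOf]

theorem vOf_fiberAlloc_balancedOwner (hn : 0 < n) (j : Fin n) :
    vOf (lowHighValue n) (fiberAlloc (balancedOwner n hn) j) = n := by
  rw [vOf, fiberAlloc, sum_filter, Fintype.sum_sum_type]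
  rcases eq_or_ne j ⟨n - 1, Nat.sub_lt hn one_pos⟩ with rfl | hj
  · have hfar (b : Fin (n - 1)) :
        Fin.castLE (Nat.sub_le n 1) b ≠ ⟨n - 1, Nat.sub_lt hn one_pos⟩ :=
      Fin.ne_of_val_ne b.isLt.ne
    simp [balancedOwner, lowHighValue, hfar]
  · have hj' : (j : ℕ) < n - 1 :=
      lt_of_le_of_ne (Nat.le_sub_one_of_lt j.isLt) (Fin.val_ne_iff.2 hj)
    have hnear (b : Fin (n - 1)) : Fin.castLE (Nat.sub_le n 1) b = j ↔ b = ⟨j, hj'⟩ := by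
      simp [Fin.ext_iff]
    simp [balancedOwner, lowHighValue, hj.symm, hnear]

end LowHigh

/-- With goods L_1..L_n of value 1 and H_1..H_{n-1} of value n
(one copy each, identical valuations), the allocation giving agent θ < n-1
the bundle {H_θ, L_θ} and the last agent {L_n} is EF1_WC, yet the last
agent'"'"'s value is 1 while her maximin share is n. -/
theorem ef1wc_mms_tight (n : ℕ) (hn : 0 < n)
    (v : Fin n ⊕ Fin (n - 1) → ℝ)
    (hv : v = Sum.elim (fun _ => (1 : ℝ)) (fun _ => (n : ℝ)))
    (A : Fin n → Finset (Fin n ⊕ Fin (n - 1)))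
    (hAdef : A = fun i =>
      insert (Sum.inl i : Fin n ⊕ Fin (n - 1))
        (if h : (i : ℕ) < n - 1
          then ({Sum.inr ⟨(i : ℕ), h⟩} : Finset (Fin n ⊕ Fin (n - 1)))
          else ∅)) :
    IsAlloc n (fun _ => 1) A ∧ EF1wc (fun _ => v) A ∧
    vOf v (A ⟨n - 1, by omega⟩) = 1 ∧
    MMS n (fun _ => 1) v = n := by
  subst hv hAdef
  exact ⟨isAlloc_pairAlloc n,
    EF1wc_of_pairwise_disjoint (pairwise_disjoint_pairAlloc n)
      (exists_vOf_erase_pairAlloc_le_one n) (one_le_vOf_pairAlloc n),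
    vOf_pairAlloc_last n hn,
    MMS_eq_of_forall_vOf_eq hn (isAlloc_fiberAlloc (balancedOwner n hn))
      (vOf_fiberAlloc_balancedOwner n hn)⟩
end

section
/- For goods with copies and leveled additive preferences, an EFX_WC exclusive allocation always exists. Moreover, the local-search algorithm that starts from any balanced exclusive allocation (bundle sizes differing by at most one) and repeatedly swaps, for an EFX_WC-envious pair (i, j), agent i's least-valued good in A_i \ A_j with her most-valued good in A_j \ A_i, terminates at an EFX_WC allocation. -/
open Finset

variable {τ : Type*} [Fintype τ] [DecidableEq τ]

/-- Leveled preference: any larger bundle is strictly preferred. -/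
def Leveled (v : τ → ℝ) : Prop :=
  ∀ S₁ S₂ : Finset τ, S₂.card < S₁.card → vOf v S₂ < vOf v S₁

/-!
A minimiser of `∑ l, #(A l) ^ 2` over all allocations is balanced: otherwise moving a good from a
bundle with at least two goods more to a smaller one lowers the sum. Among the allocations with
these bundle sizes, take one maximising the total value the agents with a smallest bundle give their
own bundles. If `(i, j, g)` violated EFX_WC, leveledness would force `#(A i \ A j) < #(A j \ A i)`;
balance then gives `#(A j \ A i) = #(A i \ A j) + 1` and `#(A j) = #(A i) + 1`, so `i` has a
smallest bundle and `j` does not. Since `(A j \ A i).erase g` has as many goods as `A i \ A j` but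
more value for `i`, agent `i` prefers some `y ∈ A j \ A i` to some `x ∈ A i \ A j`, and exchanging
`x` for `y` keeps all bundle sizes and strictly increases the potential.
-/

section Finset

variable {ι α M : Type*}

theorem Finset.exists_lt_of_sum_lt_of_card_eq [AddCommMonoid M] [LinearOrder M]
    [IsOrderedAddMonoid M] {S T : Finset α} {f : α → M} (hcard : #S = #T)
    (hlt : ∑ x ∈ S, f x < ∑ y ∈ T, f y) : ∃ x ∈ S, ∃ y ∈ T, f x < f y := by
  by_contra! hle
  obtain rfl | hS := S.eq_empty_or_nonempty
  · rw [card_empty, eq_comm, card_eq_zero] at hcard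
    simp [hcard] at hlt
  obtain ⟨x₀, hx₀, hmin⟩ := S.exists_min_image f hS
  have := calc
    ∑ y ∈ T, f y ≤ #T • f x₀ := sum_le_card_nsmul _ _ _ fun y hy => hle x₀ hx₀ y hy
    _ = #S • f x₀ := by rw [hcard]
    _ ≤ ∑ x ∈ S, f x := card_nsmul_le_sum _ _ _ hmin
  exact this.not_gt hlt

theorem Finset.sum_lt_sum_of_eq_off_pair [Fintype ι] [DecidableEq ι] [AddCommMonoid M]
    [PartialOrder M] [IsOrderedCancelAddMonoid M] {f g : ι → M} {i j : ι} (hij : i ≠ j)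
    (heq : ∀ l, l ≠ i → l ≠ j → f l = g l) (hlt : f i + f j < g i + g j) :
    ∑ l, f l < ∑ l, g l := by
  have hj : j ∈ univ.erase i := mem_erase.mpr ⟨hij.symm, mem_univ j⟩
  rw [← add_sum_erase _ f (mem_univ i), ← add_sum_erase _ f hj, ← add_sum_erase _ g (mem_univ i),
    ← add_sum_erase _ g hj, ← add_assoc, ← add_assoc,
    sum_congr rfl fun l hl => heq l (mem_erase.mp (mem_erase.mp hl).2).1 (mem_erase.mp hl).1]
  exact add_lt_add_left hlt _

end Finset

section Allocation

variable {ι α : Type*} [DecidableEq ι] [DecidableEq α]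

def transfer (A : ι → Finset α) (i j : ι) (g : α) : ι → Finset α :=
  Function.update (Function.update A i (insert g (A i))) j ((A j).erase g)

theorem transfer_apply_left (A : ι → Finset α) {i j : ι} (hij : i ≠ j) (g : α) :
    transfer A i j g i = insert g (A i) := by
  simp [transfer, Function.update_of_ne hij]

theorem transfer_apply_right (A : ι → Finset α) (i j : ι) (g : α) :
    transfer A i j g j = (A j).erase g := by
  simp [transfer]

theorem transfer_apply_of_ne (A : ι → Finset α) {i j l : ι} (hli : l ≠ i) (hlj : l ≠ j)
    (g : α) : transfer A i j g l = A l := by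
  simp [transfer, Function.update_of_ne hli, Function.update_of_ne hlj]

theorem IsAlloc.transfer {n : ℕ} {k : α → ℕ} {A : Fin n → Finset α} (hA : IsAlloc n k A)
    {i j : Fin n} (hij : i ≠ j) {g : α} (hgj : g ∈ A j) (hgi : g ∉ A i) :
    IsAlloc n k (transfer A i j g) := by
  intro t
  rw [← hA t]
  have hmem : ∀ l, l ≠ i → l ≠ j → (t ∈ _root_.transfer A i j g l ↔ t ∈ A l) := fun l hli hlj =>
    by rw [transfer_apply_of_ne A hli hlj]
  obtain rfl | htg := eq_or_ne t g
  · have hholders : univ.filter (fun l => t ∈ _root_.transfer A i j t l)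
        = insert i ((univ.filter fun l => t ∈ A l).erase j) := by
      ext l
      obtain rfl | hli := eq_or_ne l i
      · simp [transfer_apply_left A hij, hij]
      obtain rfl | hlj := eq_or_ne l j
      · simp [transfer_apply_right, hli]
      · simp [hmem l hli hlj, hli, hlj]
    rw [hholders, card_insert_of_notMem (by simp [hgi]), card_erase_of_mem (by simp [hgj]),
      Nat.sub_add_cancel (card_pos.mpr ⟨j, by simp [hgj]⟩)]
  · congr 1
    ext l
    obtain rfl | hli := eq_or_ne l i
    · simp [transfer_apply_left A hij, htg]
    obtain rfl | hlj := eq_or_ne l j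
    · simp [transfer_apply_right, htg]
    · simp [hmem l hli hlj]

def exchange (A : ι → Finset α) (i j : ι) (x y : α) : ι → Finset α :=
  transfer (transfer A j i x) i j y

theorem exchange_apply_left (A : ι → Finset α) {i j : ι} (hij : i ≠ j) (x y : α) :
    exchange A i j x y i = insert y ((A i).erase x) := by
  rw [exchange, transfer_apply_left _ hij, transfer_apply_right]

theorem exchange_apply_right (A : ι → Finset α) {i j : ι} (hij : i ≠ j) {x y : α}
    (hxy : x ≠ y) : exchange A i j x y j = insert x ((A j).erase y) := by
  rw [exchange, transfer_apply_right, transfer_apply_left _ hij.symm, erase_insert_of_ne hxy]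

theorem exchange_apply_of_ne (A : ι → Finset α) {i j l : ι} (hli : l ≠ i) (hlj : l ≠ j)
    (x y : α) : exchange A i j x y l = A l := by
  rw [exchange, transfer_apply_of_ne _ hli hlj, transfer_apply_of_ne _ hlj hli]

theorem IsAlloc.exchange {n : ℕ} {k : α → ℕ} {A : Fin n → Finset α} (hA : IsAlloc n k A)
    {i j : Fin n} (hij : i ≠ j) {x y : α} (hx : x ∈ A i \ A j) (hy : y ∈ A j \ A i) :
    IsAlloc n k (exchange A i j x y) := by
  rw [mem_sdiff] at hx hy
  refine (hA.transfer hij.symm hx.1 hx.2).transfer hij ?_ ?_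
  · rw [transfer_apply_left _ hij.symm]
    exact mem_insert_of_mem hy.1
  · rw [transfer_apply_right]
    exact fun h => hy.2 (mem_of_mem_erase h)

def bundleSizes (A : ι → Finset α) : ι → ℕ := fun l => #(A l)

theorem bundleSizes_exchange (A : ι → Finset α) {i j : ι} (hij : i ≠ j) {x y : α}
    (hx : x ∈ A i \ A j) (hy : y ∈ A j \ A i) :
    bundleSizes (exchange A i j x y) = bundleSizes A := by
  rw [mem_sdiff] at hx hy
  have hxy : x ≠ y := by rintro rfl; exact hy.2 hx.1
  funext l
  obtain rfl | hli := eq_or_ne l i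
  · simp only [bundleSizes, exchange_apply_left A hij,
      card_insert_of_notMem fun h => hy.2 (mem_of_mem_erase h), card_erase_add_one hx.1]
  obtain rfl | hlj := eq_or_ne l j
  · simp only [bundleSizes, exchange_apply_right A hij hxy,
      card_insert_of_notMem fun h => hx.2 (mem_of_mem_erase h), card_erase_add_one hy.1]
  · simp only [bundleSizes, exchange_apply_of_ne A hli hlj]

theorem sum_sq_bundleSizes_transfer_lt [Fintype ι] {A : ι → Finset α} {i j : ι} (hij : i ≠ j)
    {g : α} (hgj : g ∈ A j) (hgi : g ∉ A i) (hsize : #(A i) + 1 < #(A j)) :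
    ∑ l, bundleSizes (transfer A i j g) l ^ 2 < ∑ l, bundleSizes A l ^ 2 := by
  refine sum_lt_sum_of_eq_off_pair hij (fun l hli hlj => ?_) ?_
  · simp only [bundleSizes, transfer_apply_of_ne A hli hlj]
  · have hj := card_erase_add_one hgj
    simp only [bundleSizes, transfer_apply_left A hij, transfer_apply_right,
      card_insert_of_notMem hgi]
    nlinarith

def IsBalanced (s : ι → ℕ) : Prop := ∀ a b, s b ≤ s a + 1

def argminSizes [Fintype ι] (s : ι → ℕ) : Finset ι := univ.filter fun l => ∀ m, s l ≤ s m

end Allocation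

section Existence

variable {α : Type*} [DecidableEq α] {n : ℕ} {k : α → ℕ}

theorem IsAlloc.isBalanced_of_minimal {A : Fin n → Finset α} (hA : IsAlloc n k A)
    (hmin : ∀ B, IsAlloc n k B → ∑ l, bundleSizes A l ^ 2 ≤ ∑ l, bundleSizes B l ^ 2) :
    IsBalanced (bundleSizes A) := by
  intro a b
  by_contra! hsize
  have hab : a ≠ b := by rintro rfl; omega
  obtain ⟨g, hgb, hga⟩ := exists_mem_notMem_of_card_lt_card (s := A a) (t := A b)
    (by unfold bundleSizes at hsize; omega)
  exact (hmin _ (hA.transfer hab hgb hga)).not_gt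
    (sum_sq_bundleSizes_transfer_lt hab hgb hga hsize)

theorem exists_isAlloc [Fintype α] (hk : ∀ t, k t ≤ n) : ∃ A, IsAlloc n k A := by
  refine ⟨fun i => univ.filter fun t => (i : ℕ) < k t, fun t => ?_⟩
  have hholders : univ.filter (fun i : Fin n => t ∈ univ.filter fun t => (i : ℕ) < k t)
      = (range (k t)).attachFin fun _ hm => (mem_range.mp hm).trans_le (hk t) := by
    ext i
    simp
  rw [hholders, card_attachFin, card_range]

theorem exists_isAlloc_isBalanced [Fintype α] (hk : ∀ t, k t ≤ n) :
    ∃ A, IsAlloc n k A ∧ IsBalanced (bundleSizes A) := by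
  classical
  obtain ⟨A₀, hA₀⟩ := exists_isAlloc hk
  obtain ⟨A, hA, hmin⟩ := (univ.filter (IsAlloc n k)).exists_min_image
    (fun A => ∑ l, bundleSizes A l ^ 2) ⟨A₀, mem_filter.mpr ⟨mem_univ _, hA₀⟩⟩
  simp only [mem_filter, mem_univ, true_and] at hA hmin
  exact ⟨A, hA, hA.isBalanced_of_minimal hmin⟩

end Existence

section EFX

variable {ι α : Type*}

theorem Leveled.card_le_of_vOf_lt {w : α → ℝ} (hw : Leveled w) {S T : Finset α}
    (hlt : vOf w S < vOf w T) : #S ≤ #T :=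
  not_lt.mp fun hTS => (hw S T hTS).asymm hlt

variable [DecidableEq α]

theorem vOf_insert_erase (w : α → ℝ) {S : Finset α} {x y : α} (hx : x ∈ S) (hy : y ∉ S) :
    vOf w (insert y (S.erase x)) = vOf w S - w x + w y := by
  unfold vOf
  rw [sum_insert fun h => hy (mem_of_mem_erase h), ← add_sum_erase S w hx]
  ring

theorem IsBalanced.card_sdiff_eq_of_lt {A : ι → Finset α} (hbal : IsBalanced (bundleSizes A))
    {i j : ι} (hlt : #(A i \ A j) < #(A j \ A i)) :
    #(A j \ A i) = #(A i \ A j) + 1 ∧ #(A j) = #(A i) + 1 := by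
  have hi := card_sdiff_add_card_inter (A i) (A j)
  have hj := card_sdiff_add_card_inter (A j) (A i)
  have hji : #(A j) ≤ #(A i) + 1 := hbal i j
  rw [inter_comm] at hj
  omega

theorem IsBalanced.mem_argminSizes [Fintype ι] {s : ι → ℕ} (hbal : IsBalanced s) {i j : ι}
    (hij : s j = s i + 1) : i ∈ argminSizes s ∧ j ∉ argminSizes s := by
  simp only [argminSizes, mem_filter, mem_univ, true_and, not_forall, not_le]
  exact ⟨fun m => by have := hbal m j; omega, i, by omega⟩

variable [Fintype ι] [DecidableEq ι]

def smallWelfare (v : ι → α → ℝ) (A : ι → Finset α) : ℝ :=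
  ∑ l ∈ argminSizes (bundleSizes A), vOf (v l) (A l)

theorem smallWelfare_exchange_gt (v : ι → α → ℝ) {A : ι → Finset α}
    (hbal : IsBalanced (bundleSizes A)) {i j : ι} (hsize : #(A j) = #(A i) + 1) {x y : α}
    (hx : x ∈ A i \ A j) (hy : y ∈ A j \ A i) (hxy : v i x < v i y) :
    smallWelfare v A < smallWelfare v (exchange A i j x y) := by
  have hij : i ≠ j := by rintro rfl; omega
  obtain ⟨hi, hj⟩ := hbal.mem_argminSizes hsize
  rw [smallWelfare, smallWelfare, bundleSizes_exchange A hij hx hy]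
  have hgain : vOf (v i) (A i) < vOf (v i) (exchange A i j x y i) := by
    rw [mem_sdiff] at hx hy
    rw [exchange_apply_left A hij, vOf_insert_erase _ hx.1 hy.2]
    linarith
  refine sum_lt_sum (fun l hl => ?_) ⟨i, hi, hgain⟩
  obtain rfl | hli := eq_or_ne l i
  · exact hgain.le
  · rw [exchange_apply_of_ne A hli (by rintro rfl; exact hj hl)]

end EFX

theorem IsAlloc.efxwc_of_forall_smallWelfare_le {α : Type*} [DecidableEq α] {n : ℕ}
    {k : α → ℕ} {v : Fin n → α → ℝ} (hlev : ∀ i, Leveled (v i)) {A : Fin n → Finset α}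
    (hA : IsAlloc n k A) (hbal : IsBalanced (bundleSizes A))
    (hmax : ∀ B, IsAlloc n k B → bundleSizes B = bundleSizes A →
      smallWelfare v B ≤ smallWelfare v A) :
    EFXwc v A := by
  intro i j g hg
  by_contra! hviol
  have hcard := (hlev i).card_le_of_vOf_lt hviol
  rw [card_erase_of_mem hg] at hcard
  have hpos := card_pos.mpr ⟨g, hg⟩
  obtain ⟨hXY, hsize⟩ := hbal.card_sdiff_eq_of_lt (i := i) (j := j) (by omega)
  obtain ⟨x, hx, y, hy, hxy⟩ := exists_lt_of_sum_lt_of_card_eq (f := v i)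
    (by rw [card_erase_of_mem hg]; omega) hviol
  replace hy := mem_of_mem_erase hy
  have hij : i ≠ j := by rintro rfl; omega
  exact (hmax _ (hA.exchange hij hx hy) (bundleSizes_exchange A hij hx hy)).not_gt
    (smallWelfare_exchange_gt v hbal hsize hx hy hxy)

theorem efxwc_exists_leveled_general {n : ℕ} {k : τ → ℕ}
    (hk : ∀ t, k t ≤ n) (v : Fin n → τ → ℝ) (hlev : ∀ i, Leveled (v i)) :
    ∃ A : Fin n → Finset τ, IsAlloc n k A ∧ EFXwc v A := by
  classical
  obtain ⟨A₀, hA₀, hbal⟩ := exists_isAlloc_isBalanced hk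
  obtain ⟨A, hA, hmax⟩ :=
    (univ.filter fun B => IsAlloc n k B ∧ bundleSizes B = bundleSizes A₀).exists_max_image
      (smallWelfare v) ⟨A₀, by simp [hA₀]⟩
  simp only [mem_filter, mem_univ, true_and] at hA hmax
  refine ⟨A, hA.1, hA.1.efxwc_of_forall_smallWelfare_le hlev (hA.2 ▸ hbal) fun B hB hsize => ?_⟩
  exact hmax B ⟨hB, hsize.trans hA.2⟩

/-- For goods with copies and leveled additive preferences, an
EFX_WC exclusive allocation always exists. -/
theorem efxwc_exists_leveled {n : ℕ} {k : τ → ℕ} (hn : 0 < n)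
    (hk : ∀ t, k t ≤ n) (v : Fin n → τ → ℝ) (hlev : ∀ i, Leveled (v i)) :
    ∃ A : Fin n → Finset τ, IsAlloc n k A ∧ EFXwc v A :=
  efxwc_exists_leveled_general hk v hlev
end

section
/- For leveled additive preferences over goods with copies, if in an exclusive allocation with bundle sizes differing by at most one some agent i EFX_WC-envies agent j, then i's bundle is strictly smaller than j's, and moreover max_{g ∈ A_j \ A_i} v_i(g) > min_{g ∈ A_i \ A_j} v_i(g). -/
/-!
Leveledness turns EFX_WC-envy into a cardinality statement: since `A i \ A j` is valued below
`(A j \ A i).erase g`, it has at most as many goods, so `A j \ A i` is strictly larger, and with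
it `A j`. Balance then forces `|A i \ A j| = |(A j \ A i).erase g|`, and among equally many goods
the envy can only come from some good of `A j \ A i` beating some good of `A i \ A j`.
-/

open Finset

variable {τ : Type*} [Fintype τ] [DecidableEq τ]

theorem Leveled.card_le_of_vOf_lt_s18 {α : Type*} {v : α → ℝ} (hv : Leveled v) {S T : Finset α}
    (hST : vOf v S < vOf v T) : S.card ≤ T.card :=
  not_lt.1 fun hlt => (hv S T hlt).not_gt hST

theorem vOf_le_of_card_eq_of_forall_le {α : Type*} {v : α → ℝ} {S T : Finset α}
    (hcard : S.card = T.card) (hle : ∀ s ∈ S, ∀ t ∈ T, v s ≤ v t) : vOf v S ≤ vOf v T := by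
  rcases T.eq_empty_or_nonempty with rfl | hT
  · rw [card_empty, card_eq_zero] at hcard
    simp [hcard]
  obtain ⟨t₀, ht₀, hmin⟩ := T.exists_min_image v hT
  calc vOf v S ≤ S.card • v t₀ := sum_le_card_nsmul _ _ _ fun s hs => hle s hs t₀ ht₀
    _ = T.card • v t₀ := by rw [hcard]
    _ ≤ vOf v T := card_nsmul_le_sum _ _ _ hmin

theorem leveled_envy_structure_general {n : ℕ} {v : Fin n → τ → ℝ}
    {A : Fin n → Finset τ}
    (hlev : ∀ i, Leveled (v i))
    (hbal : ∀ i j, (A i).card ≤ (A j).card + 1) (i j : Fin n)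
    (henvy : ∃ g ∈ A j \ A i,
      vOf (v i) (A i \ A j) < vOf (v i) ((A j \ A i).erase g)) :
    (A i).card < (A j).card ∧
    ∃ g ∈ A j \ A i, ∃ g' ∈ A i \ A j, v i g' < v i g := by
  obtain ⟨g, hg, hv⟩ := henvy
  have hfewer : (A i \ A j).card < (A j \ A i).card := by
    have := (hlev i).card_le_of_vOf_lt_s18 hv
    rw [card_erase_of_mem hg] at this
    have := card_pos.2 ⟨g, hg⟩
    omega
  refine ⟨card_sdiff_lt_card_sdiff_iff.1 hfewer, ?_⟩
  have hcard : ((A j \ A i).erase g).card = (A i \ A j).card := by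
    have hi := card_sdiff_add_card_inter (A i) (A j)
    have hj := card_sdiff_add_card_inter (A j) (A i)
    rw [inter_comm] at hj
    rw [card_erase_of_mem hg]
    have := hbal j i
    omega
  by_contra! hno
  exact (vOf_le_of_card_eq_of_forall_le hcard
    fun e he d hd => hno e (mem_of_mem_erase he) d hd).not_gt hv

/-- With leveled additive preferences and bundle sizes
differing by at most one, if agent i EFX_WC-envies agent j then i'"'"'s bundle
is strictly smaller, and the best good of A_j \ A_i exceeds the worst good
of A_i \ A_j for agent i. -/
theorem leveled_envy_structure {n : ℕ} {k : τ → ℕ} {v : Fin n → τ → ℝ}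
    {A : Fin n → Finset τ} (hA : IsAlloc n k A)
    (hlev : ∀ i, Leveled (v i))
    (hbal : ∀ i j, (A i).card ≤ (A j).card + 1) (i j : Fin n)
    (henvy : ∃ g ∈ A j \ A i,
      vOf (v i) (A i \ A j) < vOf (v i) ((A j \ A i).erase g)) :
    (A i).card < (A j).card ∧
    ∃ g ∈ A j \ A i, ∃ g' ∈ A i \ A j, v i g' < v i g :=
  leveled_envy_structure_general hlev hbal i j henvy
end
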